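/- Let a¹¹, a¹², b¹, T^X be real numbers with T^X > 0, let μ = (μ₁, μ₂) ∈ ℝ², and let Σ be a symmetric positive-definite real 2×2 matrix. Let p(x,y) be the bivariate Gaussian density with mean μ and covariance Σ, with marginals p_X(x) = (2πΣ¹¹)^{-1/2} exp(−(x−μ₁)²/(2Σ¹¹)) and p_Y(y) = (2πΣ²²)^{-1/2} exp(−(y−μ₂)²/(2Σ²²)), and define the flux J^X(x,y) := (a¹¹x + a¹²y + b¹) p(x,y) − T^X ∂_x p(x,y). Then the learning-rate integral evaluates to ∫_{ℝ²} J^X(x,y) · ∂_x ln( p(x,y) / (p_X(x) p_Y(y)) ) dx dy = a¹² Σ¹²/Σ¹¹ − T^X Σ²²/det Σ + T^X/Σ¹¹. (Equation (B21): the analytical expression of the learning rate l_X for linear Langevin systems in a general, possibly non-stationary, Gaussian state.) -/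

import Mathlib

/-!
Write `p(x, y) = p(x | y) p_Y(y)`, where the conditional law of `X` given `Y = y` is Gaussian
with mean `m(y) = μ₁ + (Σ¹²/Σ²²)(y − μ₂)` and variance `det Σ / Σ²²`. Then `p_Y` cancels in the
log-ratio, and both `∂ₓ ln (p / (p_X p_Y))` and `J^X / p` are affine in `u = x − m(y)` and
`w = y − μ₂`. The shear `(x, y) ↦ (u, w)` preserves Lebesgue measure and turns `p` into the product
of two centred Gaussian densities, so the learning rate reduces to the variances `det Σ / Σ²²`
and `Σ²²`.
-/

open Real Matrix MeasureTheory

/-- The bivariate Gaussian density with mean `μ` and covariance matrix `S`: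
`p(x,y) = (2π √(det S))⁻¹ exp(−½ ((x,y) − μ)ᵀ S⁻¹ ((x,y) − μ))`. -/
noncomputable def gauss2 (μ : Fin 2 → ℝ) (S : Matrix (Fin 2) (Fin 2) ℝ) (x y : ℝ) : ℝ :=
  (2 * π * Real.sqrt S.det)⁻¹ *
    Real.exp (-(1 / 2) * ((![x, y] - μ) ⬝ᵥ (S⁻¹ *ᵥ (![x, y] - μ))))

/-- The one-dimensional Gaussian density with mean `m` and variance `v`. -/
noncomputable def gauss1 (m v x : ℝ) : ℝ :=
  (Real.sqrt (2 * π * v))⁻¹ * Real.exp (-(x - m) ^ 2 / (2 * v))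

open ProbabilityTheory

section Gauss1

variable {v : ℝ}

lemma gauss1_pos (hv : 0 < v) (m x : ℝ) : 0 < gauss1 m v x := by
  unfold gauss1
  positivity

lemma gauss1_zero_sub (m v x : ℝ) : gauss1 0 v (x - m) = gauss1 m v x := by
  simp only [gauss1, sub_zero]

lemma hasDerivAt_gauss1 (m v x : ℝ) :
    HasDerivAt (gauss1 m v) (-(x - m) / v * gauss1 m v x) x := by
  have h := ((((hasDerivAt_id x).sub_const m).pow 2).neg.div_const (2 * v)).exp.const_mul
    (Real.sqrt (2 * π * v))⁻¹
  refine h.congr_deriv ?_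
  simp only [gauss1, id, Pi.neg_apply, Pi.pow_apply]
  ring

lemma hasDerivAt_log_gauss1 (hv : 0 < v) (m x : ℝ) :
    HasDerivAt (fun t => Real.log (gauss1 m v t)) (-(x - m) / v) x := by
  refine ((hasDerivAt_gauss1 m v x).log (gauss1_pos hv m x).ne').congr_deriv ?_
  field_simp [(gauss1_pos hv m x).ne']

lemma gauss1_eq_gaussianPDFReal (hv : 0 ≤ v) (m : ℝ) :
    gauss1 m v = gaussianPDFReal m v.toNNReal := by
  ext x
  simp [gauss1, gaussianPDFReal, Real.coe_toNNReal _ hv]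

lemma integral_mul_gauss1 (hv : 0 < v) (m : ℝ) (f : ℝ → ℝ) :
    ∫ x, f x * gauss1 m v x = ∫ x, f x ∂gaussianReal m v.toNNReal := by
  rw [integral_gaussianReal_eq_integral_smul (by simpa using hv), gauss1_eq_gaussianPDFReal hv.le]
  simp only [smul_eq_mul, mul_comm]

lemma integrable_pow_mul_gauss1 (hv : 0 < v) (k : ℕ) :
    Integrable fun x => x ^ k * gauss1 0 v x := by
  have h := (integrable_rpow_mul_exp_neg_mul_sq (b := (2 * v)⁻¹) (by positivity)
    (s := k) (by linarith [k.cast_nonneg (α := ℝ)])).const_mul (Real.sqrt (2 * π * v))⁻¹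
  refine h.congr (ae_of_all _ fun x => ?_)
  simp only [gauss1, Real.rpow_natCast, sub_zero]
  field_simp

lemma integral_pow_mul_gauss1 (hv : 0 < v) (k : Fin 3) :
    ∫ x, x ^ (k : ℕ) * gauss1 0 v x = ![1, 0, v] k := by
  rw [integral_mul_gauss1 hv]
  fin_cases k
  · simp
  · simp
  · have hvar := variance_of_integral_eq_zero measurable_id.aemeasurable
      (integral_id_gaussianReal (μ := 0) (v := v.toNNReal))
    rw [variance_id_gaussianReal] at hvar
    simpa [hv.le] using hvar.symm

end Gauss1

lemma integral_poly_mul_gauss1_prod {V W : ℝ} (hV : 0 < V) (hW : 0 < W)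
    (c : Fin 3 → Fin 3 → ℝ) :
    ∫ p : ℝ × ℝ, (∑ i, ∑ j, c i j * p.1 ^ (i : ℕ) * p.2 ^ (j : ℕ)) *
        (gauss1 0 V p.1 * gauss1 0 W p.2) =
      ∑ i, ∑ j, c i j * ![1, 0, V] i * ![1, 0, W] j := by
  have hterm : ∀ i j : Fin 3, (fun p : ℝ × ℝ =>
      c i j * p.1 ^ (i : ℕ) * p.2 ^ (j : ℕ) * (gauss1 0 V p.1 * gauss1 0 W p.2)) =
      fun p => c i j * ((p.1 ^ (i : ℕ) * gauss1 0 V p.1) * (p.2 ^ (j : ℕ) * gauss1 0 W p.2)) :=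
    fun i j => funext fun p => by ring
  have hint : ∀ i j : Fin 3, Integrable (fun p : ℝ × ℝ =>
      c i j * p.1 ^ (i : ℕ) * p.2 ^ (j : ℕ) * (gauss1 0 V p.1 * gauss1 0 W p.2)) := by
    intro i j
    rw [hterm, Measure.volume_eq_prod]
    exact ((integrable_pow_mul_gauss1 hV _).mul_prod (integrable_pow_mul_gauss1 hW _)).const_mul _
  simp_rw [Finset.sum_mul]
  rw [integral_finsetSum _ fun i _ => integrable_finsetSum _ fun j _ => hint i j]
  refine Finset.sum_congr rfl fun i _ => ?_
  rw [integral_finsetSum _ fun j _ => hint i j]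
  refine Finset.sum_congr rfl fun j _ => ?_
  rw [hterm, integral_const_mul, Measure.volume_eq_prod,
    integral_prod_mul (fun x => x ^ (i : ℕ) * gauss1 0 V x) (fun y => y ^ (j : ℕ) * gauss1 0 W y),
    integral_pow_mul_gauss1 hV, integral_pow_mul_gauss1 hW, mul_assoc]

lemma integral_affine_mul_linear_gauss1_prod {V W : ℝ} (hV : 0 < V) (hW : 0 < W)
    (α β ζ γ δ : ℝ) :
    ∫ p : ℝ × ℝ, (α * p.1 + β * p.2 + ζ) * (γ * p.1 + δ * p.2) *
        (gauss1 0 V p.1 * gauss1 0 W p.2) = α * γ * V + β * δ * W := by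
  convert integral_poly_mul_gauss1_prod hV hW
    ![![0, ζ * δ, β * δ], ![ζ * γ, α * δ + β * γ, 0], ![α * γ, 0, 0]] using 1
  · congr 1
    ext p
    simp only [Fin.sum_univ_three, Fin.isValue, cons_val, Fin.val_zero, Fin.val_one, Fin.val_two]
    ring
  · simp only [Fin.sum_univ_three, Fin.isValue, cons_val]
    ring

lemma integral_comp_shear {E : Type*} [NormedAddCommGroup E] [NormedSpace ℝ E] {h : ℝ → ℝ}
    (hh : Measurable h) (b : ℝ) (f : ℝ × ℝ → E) :
    ∫ v : ℝ × ℝ, f (v.1 - h v.2, v.2 - b) = ∫ v, f v := by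
  let e : ℝ × ℝ ≃ᵐ ℝ × ℝ :=
    { toFun := fun v => (v.1 - h v.2, v.2 - b)
      invFun := fun v => (v.1 + h (v.2 + b), v.2 + b)
      left_inv := fun v => by simp
      right_inv := fun v => by simp
      measurable_toFun := by
        change Measurable fun v : ℝ × ℝ => (v.1 - h v.2, v.2 - b)
        fun_prop
      measurable_invFun := by
        change Measurable fun v : ℝ × ℝ => (v.1 + h (v.2 + b), v.2 + b)
        fun_prop }
  have hskew : MeasurePreserving (fun v : ℝ × ℝ => (v.1 - b, v.2 - h v.1))
      (volume.prod volume) (volume.prod volume) :=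
    (measurePreserving_sub_right volume b).skew_product (g := fun y x => x - h y) (by fun_prop)
      (ae_of_all _ fun y => (measurePreserving_sub_right volume (h y)).map_eq)
  have he : MeasurePreserving e (volume.prod volume) (volume.prod volume) :=
    Measure.measurePreserving_swap.comp (hskew.comp Measure.measurePreserving_swap)
  rw [Measure.volume_eq_prod]
  exact he.integral_comp' f

section Gauss2

variable {μ : Fin 2 → ℝ} {S : Matrix (Fin 2) (Fin 2) ℝ}

-- Mean and variance of the law of `X` given `Y = y` when `(X, Y)` has density `gauss2 μ S`.
noncomputable def gauss2CondMean (μ : Fin 2 → ℝ) (S : Matrix (Fin 2) (Fin 2) ℝ) (y : ℝ) : ℝ :=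
  μ 0 + S 0 1 / S 1 1 * (y - μ 1)

noncomputable def gauss2CondVar (S : Matrix (Fin 2) (Fin 2) ℝ) : ℝ :=
  S.det / S 1 1

lemma measurable_gauss2CondMean : Measurable (gauss2CondMean μ S) := by
  unfold gauss2CondMean
  fun_prop

lemma gauss2CondVar_pos (hS : S.PosDef) : 0 < gauss2CondVar S :=
  div_pos hS.det_pos hS.diag_pos

lemma Matrix.PosDef.apply_one_zero (hS : S.PosDef) : S 1 0 = S 0 1 := by
  simpa using hS.isHermitian.apply 0 1

lemma Matrix.PosDef.det_fin_two_eq (hS : S.PosDef) : S.det = S 0 0 * S 1 1 - S 0 1 ^ 2 := by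
  rw [det_fin_two, hS.apply_one_zero]
  ring

lemma dotProduct_inv_mulVec_fin_two (hS : S 1 0 = S 0 1) (v : Fin 2 → ℝ) :
    v ⬝ᵥ (S⁻¹ *ᵥ v) = (S 1 1 * v 0 ^ 2 - 2 * S 0 1 * v 0 * v 1 + S 0 0 * v 1 ^ 2) / S.det := by
  rw [inv_def, adjugate_fin_two, Ring.inverse_eq_inv', hS]
  simp only [dotProduct, mulVec, Fin.sum_univ_two, Matrix.smul_apply, of_apply, cons_val',
    cons_val_zero, cons_val_one, cons_val_fin_one, smul_eq_mul]
  ring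

lemma gauss2_eq_gauss1_mul_gauss1 (hS : S.PosDef) (x y : ℝ) :
    gauss2 μ S x y =
      gauss1 (gauss2CondMean μ S y) (gauss2CondVar S) x * gauss1 (μ 1) (S 1 1) y := by
  have hd : 0 < S.det := hS.det_pos
  have hs1 : 0 < S 1 1 := hS.diag_pos
  rw [gauss2, dotProduct_inv_mulVec_fin_two hS.apply_one_zero, gauss1, gauss1, gauss2CondVar,
    mul_mul_mul_comm, ← mul_inv, ← Real.sqrt_mul (by positivity), ← Real.exp_add]
  congr 2
  · rw [show 2 * π * (S.det / S 1 1) * (2 * π * S 1 1) = (2 * π) ^ 2 * S.det by field_simp,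
      Real.sqrt_mul (by positivity), Real.sqrt_sq (by positivity)]
  · simp only [gauss2CondMean, Pi.sub_apply, cons_val_zero, cons_val_one]
    field_simp
    rw [hS.det_fin_two_eq]
    ring

lemma hasDerivAt_gauss2_fst (hS : S.PosDef) (x y : ℝ) :
    HasDerivAt (fun x' => gauss2 μ S x' y)
      (-(x - gauss2CondMean μ S y) / gauss2CondVar S * gauss2 μ S x y) x := by
  simp_rw [gauss2_eq_gauss1_mul_gauss1 hS]
  exact ((hasDerivAt_gauss1 _ _ x).mul_const _).congr_deriv (by ring)

lemma hasDerivAt_log_gauss2_div_gauss1_mul_gauss1 (hS : S.PosDef) (x y : ℝ) :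
    HasDerivAt (fun x' => Real.log (gauss2 μ S x' y /
        (gauss1 (μ 0) (S 0 0) x' * gauss1 (μ 1) (S 1 1) y)))
      (-(x - gauss2CondMean μ S y) / gauss2CondVar S + (x - μ 0) / S 0 0) x := by
  have hs0 : 0 < S 0 0 := hS.diag_pos
  have hs1 : 0 < S 1 1 := hS.diag_pos
  have hV := gauss2CondVar_pos hS
  have hfun : (fun x' => Real.log (gauss2 μ S x' y /
      (gauss1 (μ 0) (S 0 0) x' * gauss1 (μ 1) (S 1 1) y))) = fun x' =>
      Real.log (gauss1 (gauss2CondMean μ S y) (gauss2CondVar S) x') -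
        Real.log (gauss1 (μ 0) (S 0 0) x') := by
    ext x'
    rw [gauss2_eq_gauss1_mul_gauss1 hS, mul_div_mul_right _ _ (gauss1_pos hs1 _ _).ne',
      Real.log_div (gauss1_pos hV _ _).ne' (gauss1_pos hs0 _ _).ne']
  rw [hfun]
  exact ((hasDerivAt_log_gauss1 hV _ x).sub (hasDerivAt_log_gauss1 hs0 _ x)).congr_deriv (by ring)

lemma integral_affine_mul_linear_gauss2 (hS : S.PosDef) (α β ζ γ δ : ℝ) :
    ∫ v : ℝ × ℝ, (α * (v.1 - gauss2CondMean μ S v.2) + β * (v.2 - μ 1) + ζ) *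
        (γ * (v.1 - gauss2CondMean μ S v.2) + δ * (v.2 - μ 1)) * gauss2 μ S v.1 v.2 =
      α * γ * gauss2CondVar S + β * δ * S 1 1 := by
  simp_rw [gauss2_eq_gauss1_mul_gauss1 hS, ← gauss1_zero_sub (gauss2CondMean μ S _),
    ← gauss1_zero_sub (μ 1)]
  rw [integral_comp_shear measurable_gauss2CondMean (μ 1) (fun p =>
      (α * p.1 + β * p.2 + ζ) * (γ * p.1 + δ * p.2) *
        (gauss1 0 (gauss2CondVar S) p.1 * gauss1 0 (S 1 1) p.2)),
    integral_affine_mul_linear_gauss1_prod (gauss2CondVar_pos hS) hS.diag_pos]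

end Gauss2

theorem learning_rate_formula_general
    (a11 a12 b1 TX : ℝ)
    (μ : Fin 2 → ℝ) (S : Matrix (Fin 2) (Fin 2) ℝ)
    (hpd : S.PosDef) :
    (∫ v : ℝ × ℝ,
        ((a11 * v.1 + a12 * v.2 + b1) * gauss2 μ S v.1 v.2 -
            TX * deriv (fun x' => gauss2 μ S x' v.2) v.1) *
          deriv (fun x' => Real.log (gauss2 μ S x' v.2 /
            (gauss1 (μ 0) (S 0 0) x' * gauss1 (μ 1) (S 1 1) v.2))) v.1) =
      a12 * S 0 1 / S 0 0 - TX * S 1 1 / S.det + TX / S 0 0 := by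
  set V := gauss2CondVar S
  set k := S 0 1 / S 1 1
  have hpoint : ∀ x y : ℝ,
      ((a11 * x + a12 * y + b1) * gauss2 μ S x y - TX * deriv (fun x' => gauss2 μ S x' y) x) *
        deriv (fun x' => Real.log (gauss2 μ S x' y /
          (gauss1 (μ 0) (S 0 0) x' * gauss1 (μ 1) (S 1 1) y))) x =
      ((a11 + TX / V) * (x - gauss2CondMean μ S y) + (a11 * k + a12) * (y - μ 1) +
          (a11 * μ 0 + a12 * μ 1 + b1)) *
        ((1 / S 0 0 - 1 / V) * (x - gauss2CondMean μ S y) + k / S 0 0 * (y - μ 1)) *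
        gauss2 μ S x y := by
    intro x y
    rw [(hasDerivAt_gauss2_fst hpd x y).deriv,
      (hasDerivAt_log_gauss2_div_gauss1_mul_gauss1 hpd x y).deriv, gauss2CondMean]
    ring
  simp only [hpoint]
  rw [integral_affine_mul_linear_gauss2 hpd]
  have hs0 : S 0 0 ≠ 0 := hpd.diag_pos.ne'
  have hs1 : S 1 1 ≠ 0 := hpd.diag_pos.ne'
  have hd : S.det ≠ 0 := hpd.det_pos.ne'
  simp only [V, k, gauss2CondVar]
  field_simp
  rw [hpd.det_fin_two_eq]
  ring

/-- Equation (B21): the learning-rate integral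
`∫ J^X ∂_x ln(p/(p_X p_Y)) dx dy = a¹² Σ¹²/Σ¹¹ − T^X Σ²²/det Σ + T^X/Σ¹¹`
for a bivariate Gaussian state of the bipartite linear Langevin system. -/
theorem learning_rate_formula
    (a11 a12 b1 TX : ℝ) (hTX : 0 < TX)
    (μ : Fin 2 → ℝ) (S : Matrix (Fin 2) (Fin 2) ℝ)
    (hsymm : S.IsSymm) (hpd : S.PosDef) :
    (∫ v : ℝ × ℝ,
        ((a11 * v.1 + a12 * v.2 + b1) * gauss2 μ S v.1 v.2 -
            TX * deriv (fun x' => gauss2 μ S x' v.2) v.1) *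
          deriv (fun x' => Real.log (gauss2 μ S x' v.2 /
            (gauss1 (μ 0) (S 0 0) x' * gauss1 (μ 1) (S 1 1) v.2))) v.1) =
      a12 * S 0 1 / S 0 0 - TX * S 1 1 / S.det + TX / S 0 0 :=
  learning_rate_formula_general a11 a12 b1 TX μ S hpd
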